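/- arXiv:1908.09039 — 9 statements merged into one kernel-verified Lean document; each statement's English description precedes it below -/
import Mathlib

section
/- Let $\Gamma^1=I_1$ (the $3\times 3$ matrix with a single $1$ in the $(1,1)$ entry) and let $\Gamma^2\in\mathrm{Sym}_3(\mathbb{C})$ have rank at most $1$. Then there exists $S\in GL_3(\mathbb{C})$ such that $S^tI_1S$ and $S^t\Gamma^2S$ are both diagonal. -/
open Matrix

/-- If `Γ² ∈ Sym₃(ℂ)` has rank at most 1, then `I₁ = diag(1,0,0)` and `Γ²`
are simultaneously diagonalizable by congruence. -/
theorem stmt2 (Γ2 : Matrix (Fin 3) (Fin 3) ℂ)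
    (h2 : Γ2.IsSymm) (r2 : Γ2.rank ≤ 1) :
    ∃ S : Matrix (Fin 3) (Fin 3) ℂ, IsUnit S ∧
      (Sᵀ * Matrix.diagonal ![1, 0, 0] * S).IsDiag ∧ (Sᵀ * Γ2 * S).IsDiag := by
  -- Step 1: rank ≤ 1 gives a factorization Γ2 i j = d j * v i.
  have hp : (LinearMap.range Γ2.mulVecLin).IsPrincipal := by
    rw [← Submodule.finrank_le_one_iff_isPrincipal]
    exact r2
  obtain ⟨v, hv⟩ := hp.principal
  have hcol : ∀ j : Fin 3, ∃ t : ℂ, Γ2 *ᵥ Pi.single j 1 = t • v := by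
    intro j
    have : Γ2 *ᵥ Pi.single j 1 ∈ LinearMap.range Γ2.mulVecLin := ⟨Pi.single j 1, rfl⟩
    rw [hv, Submodule.mem_span_singleton] at this
    obtain ⟨t, ht⟩ := this
    exact ⟨t, ht.symm⟩
  choose d hd using hcol
  have hΓ : ∀ i j, Γ2 i j = d j * v i := by
    intro i j
    have := congrFun (hd j) i
    simpa [Matrix.mulVec_single] using this
  have hsym : ∀ i j, d j * v i = d i * v j := by
    intro i j
    rw [← hΓ i j, ← hΓ j i, h2.apply]
  -- Step 2: case analysis on v, choosing an explicit congruence matrix.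
  by_cases hb : v 1 ≠ 0
  · refine ⟨!![v 1, 0, 0; -(v 0), 1, v 2; 0, 0, -(v 1)], ?_, ?_, ?_⟩
    · rw [Matrix.isUnit_iff_isUnit_det, isUnit_iff_ne_zero, Matrix.det_fin_three]
      simp
      intro h; exact hb h
    · intro i j hij
      fin_cases i <;> fin_cases j <;>
        simp_all [Matrix.mul_apply, Fin.sum_univ_three, Matrix.diagonal]
    · intro i j hij
      fin_cases i <;> fin_cases j <;>
        simp only [Matrix.mul_apply, Fin.sum_univ_three, Matrix.transpose_apply, hΓ] <;>
        simp [-mul_eq_zero] <;>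
        first
          | exact absurd rfl hij
          | ring1
          | linear_combination (v 1) * (hsym 0 1)
          | linear_combination (v 1) * (hsym 1 0)
          | linear_combination (v 1) * (hsym 1 2)
          | linear_combination (v 1) * (hsym 2 1)
  · push_neg at hb
    by_cases hc : v 2 ≠ 0
    · refine ⟨!![v 2, 0, 0; 0, 0, 1; -(v 0), 1, 0], ?_, ?_, ?_⟩
      · rw [Matrix.isUnit_iff_isUnit_det, isUnit_iff_ne_zero, Matrix.det_fin_three]
        simp
        intro h; exact hc h
      · intro i j hij
        fin_cases i <;> fin_cases j <;>
          simp_all [Matrix.mul_apply, Fin.sum_univ_three, Matrix.diagonal]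
      · intro i j hij
        fin_cases i <;> fin_cases j <;>
          simp only [Matrix.mul_apply, Fin.sum_univ_three, Matrix.transpose_apply, hΓ] <;>
          simp [-mul_eq_zero] <;>
          first
            | exact absurd rfl hij
            | ring1
            | linear_combination (v 2) * (hsym 0 2)
            | linear_combination (v 2) * (hsym 2 0)
            | linear_combination (d 2) * hb - hsym 1 2
            | linear_combination hsym 1 2 - (d 2) * hb
            | linear_combination hsym 2 1 + (d 2) * hb
            | linear_combination (d 2) * hb
            | linear_combination (v 2 * d 0 - v 0 * d 2) * hb
    · push_neg at hc
      refine ⟨1, isUnit_one, ?_, ?_⟩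
      · simp [Matrix.isDiag_diagonal]
      · intro i j hij
        simp only [Matrix.transpose_one, Matrix.one_mul, Matrix.mul_one]
        fin_cases i <;> fin_cases j <;>
          simp only [hΓ, Fin.isValue, show ((⟨0, by norm_num⟩ : Fin 3)) = 0 from rfl,
            show ((⟨1, by norm_num⟩ : Fin 3)) = 1 from rfl,
            show ((⟨2, by norm_num⟩ : Fin 3)) = 2 from rfl] <;>
          first
            | exact absurd rfl hij
            | linear_combination hsym 0 1 + d 0 * hb
            | linear_combination hsym 0 2 + d 0 * hc
            | linear_combination d 0 * hb
            | linear_combination d 2 * hb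
            | linear_combination d 0 * hc
            | linear_combination d 1 * hc
end

section
/- A finite-dimensional complex Lie superalgebra $\mathfrak{g}=\mathfrak{g}_0\oplus\mathfrak{g}_1$ is nilpotent (i.e. the descending series $\mathfrak{g}^0=\mathfrak{g}$, $\mathfrak{g}^k=[\mathfrak{g},\mathfrak{g}^{k-1}]$ eventually vanishes) if and only if $\mathfrak{g}_0$ is a nilpotent Lie algebra and for every $x\in\mathfrak{g}_0$ the operator $\rho(x)=[x,\cdot]\colon\mathfrak{g}_1\to\mathfrak{g}_1$ is nilpotent. -/
/-- A complex Lie superalgebra `𝔤 = V0 ⊕ V1` in component form: an even bracket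
`b0`, an action `ρ` of the even part on the odd part, and a symmetric map `Γ`
on the odd part, subject to the (super) Jacobi identities. -/
structure SuperBracket (V0 V1 : Type*) [AddCommGroup V0] [Module ℂ V0]
    [AddCommGroup V1] [Module ℂ V1] where
  b0 : V0 →ₗ[ℂ] V0 →ₗ[ℂ] V0
  ρ : V0 →ₗ[ℂ] V1 →ₗ[ℂ] V1
  Γ : V1 →ₗ[ℂ] V1 →ₗ[ℂ] V0
  b0_skew : ∀ x y, b0 x y = - b0 y x
  Γ_symm : ∀ u v, Γ u v = Γ v u
  jacobi00 : ∀ x y z, b0 (b0 x y) z + b0 (b0 y z) x + b0 (b0 z x) y = 0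
  jacobi001 : ∀ x y u, ρ (b0 x y) u = ρ x (ρ y u) - ρ y (ρ x u)
  jacobi011 : ∀ x u v, b0 x (Γ u v) = Γ (ρ x u) v + Γ u (ρ x v)
  jacobi111 : ∀ u v w, ρ (Γ u v) w + ρ (Γ v w) u + ρ (Γ u w) v = 0

namespace SuperBracket

variable {V0 V1 : Type*} [AddCommGroup V0] [Module ℂ V0] [AddCommGroup V1] [Module ℂ V1]

/-- The descending central series `𝔤⁰ = 𝔤`, `𝔤ᵏ = [𝔤, 𝔤ᵏ⁻¹]`, recorded as a
pair (even part, odd part) of submodules. -/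
def series (L : SuperBracket V0 V1) : ℕ → Submodule ℂ V0 × Submodule ℂ V1
  | 0 => (⊤, ⊤)
  | k + 1 =>
      (Submodule.span ℂ ({z | ∃ x y, y ∈ (series L k).1 ∧ z = L.b0 x y} ∪
          {z | ∃ u v, v ∈ (series L k).2 ∧ z = L.Γ u v}),
        Submodule.span ℂ
          {z | ∃ x v, (x ∈ (series L k).1 ∨ v ∈ (series L k).2) ∧ z = L.ρ x v})

/-- A Lie superalgebra is nilpotent if its descending central series vanishes. -/
def IsNilpotent (L : SuperBracket V0 V1) : Prop := ∃ k, series L k = (⊥, ⊥)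

/-- The descending central series of the even part `𝔤₀` alone. -/
def series0 (L : SuperBracket V0 V1) : ℕ → Submodule ℂ V0
  | 0 => ⊤
  | k + 1 => Submodule.span ℂ {z | ∃ x y, y ∈ series0 L k ∧ z = L.b0 x y}

end SuperBracket

/-! `𝔤` is nilpotent once its ascending central series reaches `𝔤`, and in finite dimension
this holds as soon as every proper graded ideal `Z` (a pair with `Z ≤ normalizer Z`) has a
homogeneous element `c ∉ Z` that is central modulo `Z`. Engel's theorem for the nilpotent Lie
algebra `𝔤₀`, acting on `𝔤₀ / Z₀` or on `𝔤₁ / Z₁`, gives a homogeneous `c ∉ Z` with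
`[𝔤₀, c] ⊆ Z`. We then enlarge, one vector `b` at a time, a subspace `T ⊆ 𝔤₁` with
`[T, c] ⊆ Z`, climbing the upper central series of the nilpotent `𝔤₀`-module `𝔤₁`, so that
`[𝔤₀, b] ⊆ T`. If `[b, c] ∉ Z`, the super Jacobi identity shows that `[b, c]` is a new such
element for `T + ℂb`: the only bracket not controlled by `T` is `[b, [b, c]] = ½ [[b, b], c]`,
with `[b, b] ∈ 𝔤₀`. -/

lemma LieSubmodule.lt_normalizer_of_ne_top {R L M : Type*} [CommRing R] [LieRing L]
    [LieAlgebra R L] [AddCommGroup M] [Module R M] [LieRingModule L M] [LieModule R L M]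
    [LieModule.IsNilpotent L M] {N : LieSubmodule R L M} (hN : N ≠ ⊤) : N < N.normalizer := by
  refine N.le_normalizer.lt_of_ne fun h => hN ?_
  obtain ⟨k, hk⟩ := (LieModule.isNilpotent_iff_exists_ucs_eq_top R).mp ‹_›
  exact eq_top_iff.mpr (hk ▸ LieSubmodule.ucs_le_of_normalizer_eq_self h.symm k)

lemma Submodule.mem_of_add_self_mem {K W : Type*} [DivisionRing K] [NeZero (2 : K)]
    [AddCommGroup W] [Module K W] {p : Submodule K W} {w : W} (h : w + w ∈ p) : w ∈ p :=
  (p.smul_mem_iff (two_ne_zero : (2 : K) ≠ 0)).mp (by rwa [two_smul])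

namespace SuperBracket

variable {V0 V1 : Type*} [AddCommGroup V0] [Module ℂ V0] [AddCommGroup V1] [Module ℂ V1]
  (L : SuperBracket V0 V1)

lemma b0_self (x : V0) : L.b0 x x = 0 := by
  have h : (2 : ℂ) • L.b0 x x = 0 := by
    rw [two_smul]
    nth_rewrite 1 [L.b0_skew x x]
    exact neg_add_cancel _
  exact (smul_eq_zero.mp h).resolve_left two_ne_zero

lemma b0_leibniz (x y z : V0) :
    L.b0 x (L.b0 y z) = L.b0 (L.b0 x y) z + L.b0 y (L.b0 x z) := by
  have h := L.jacobi00 x y z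
  rw [L.b0_skew (L.b0 y z), L.b0_skew z, map_neg, LinearMap.neg_apply, L.b0_skew (L.b0 x z)] at h
  linear_combination (norm := abel) -h

lemma ρ_leibniz (x y : V0) (u : V1) :
    L.ρ x (L.ρ y u) = L.ρ (L.b0 x y) u + L.ρ y (L.ρ x u) := by
  rw [L.jacobi001]
  abel

lemma series0_le_series_fst (k : ℕ) : L.series0 k ≤ (L.series k).1 := by
  induction k with
  | zero => exact le_top
  | succ k ih =>
    refine Submodule.span_le.mpr ?_
    rintro _ ⟨x, y, hy, rfl⟩
    exact Submodule.subset_span (Or.inl ⟨x, y, ih hy, rfl⟩)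

lemma ρ_pow_mem_series_snd (x : V0) (k : ℕ) (v : V1) :
    (L.ρ x ^ k) v ∈ (L.series k).2 := by
  induction k with
  | zero => exact Submodule.mem_top
  | succ k ih =>
    rw [pow_succ', Module.End.mul_apply]
    exact Submodule.subset_span ⟨x, _, Or.inr ih, rfl⟩

lemma b0_pow_mem_series0 (x : V0) (k : ℕ) (a : V0) : (L.b0 x ^ k) a ∈ L.series0 k := by
  induction k with
  | zero => exact Submodule.mem_top
  | succ k ih =>
    rw [pow_succ', Module.End.mul_apply]
    exact Submodule.subset_span ⟨x, _, ih, rfl⟩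

section UpperCentralSeries

/-- The homogeneous components of `{c ∈ 𝔤 | [𝔤, c] ⊆ Z}`. -/
def normalizer (Z : Submodule ℂ V0 × Submodule ℂ V1) : Submodule ℂ V0 × Submodule ℂ V1 :=
  ((⨅ x, Z.1.comap (L.b0 x)) ⊓ ⨅ u, Z.2.comap (L.ρ.flip u),
    (⨅ x, Z.2.comap (L.ρ x)) ⊓ ⨅ u, Z.1.comap (L.Γ u))

def ucs : ℕ → Submodule ℂ V0 × Submodule ℂ V1
  | 0 => ⊥
  | k + 1 => L.normalizer (ucs k)

variable {L} {Z : Submodule ℂ V0 × Submodule ℂ V1}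

lemma mem_normalizer_fst {a : V0} :
    a ∈ (L.normalizer Z).1 ↔ (∀ x, L.b0 x a ∈ Z.1) ∧ ∀ u, L.ρ a u ∈ Z.2 := by
  simp [normalizer]

lemma mem_normalizer_snd {v : V1} :
    v ∈ (L.normalizer Z).2 ↔ (∀ x, L.ρ x v ∈ Z.2) ∧ ∀ u, L.Γ u v ∈ Z.1 := by
  simp [normalizer]

variable (L) in
lemma normalizer_mono : Monotone L.normalizer := by
  intro Z Z' h
  constructor
  · intro a ha
    rw [mem_normalizer_fst] at ha ⊢
    exact ⟨fun x => h.1 (ha.1 x), fun u => h.2 (ha.2 u)⟩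
  · intro v hv
    rw [mem_normalizer_snd] at hv ⊢
    exact ⟨fun x => h.2 (hv.1 x), fun u => h.1 (hv.2 u)⟩

lemma series_succ_le_of_le_normalizer {k : ℕ} (h : L.series k ≤ L.normalizer Z) :
    L.series (k + 1) ≤ Z := by
  refine ⟨Submodule.span_le.mpr ?_, Submodule.span_le.mpr ?_⟩
  · rintro _ (⟨x, a, ha, rfl⟩ | ⟨u, v, hv, rfl⟩)
    · exact (mem_normalizer_fst.mp (h.1 ha)).1 x
    · exact (mem_normalizer_snd.mp (h.2 hv)).2 u
  · rintro _ ⟨x, v, hx | hv, rfl⟩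
    · exact (mem_normalizer_fst.mp (h.1 hx)).2 v
    · exact (mem_normalizer_snd.mp (h.2 hv)).1 x

variable (L) in
lemma monotone_ucs : Monotone L.ucs := by
  refine monotone_nat_of_le_succ fun k => ?_
  induction k with
  | zero => exact bot_le
  | succ k ih => exact L.normalizer_mono ih

lemma series_le_ucs (k m : ℕ) (h : L.ucs (k + m) = ⊤) : L.series k ≤ L.ucs m := by
  induction k generalizing m with
  | zero => rw [zero_add] at h; rw [h]; exact le_rfl
  | succ k ih =>
    refine series_succ_le_of_le_normalizer (Z := L.ucs m) (ih (m + 1) ?_)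
    rwa [show k + (m + 1) = k + 1 + m by omega]

end UpperCentralSeries

section CentralModulo

variable {L} {Z : Submodule ℂ V0 × Submodule ℂ V1} {T : Submodule ℂ V1}

def HasCentralModulo (L : SuperBracket V0 V1) (Z : Submodule ℂ V0 × Submodule ℂ V1)
    (T : Submodule ℂ V1) : Prop :=
  (∃ a ∉ Z.1, (∀ x, L.b0 x a ∈ Z.1) ∧ T ≤ Z.2.comap (L.ρ a)) ∨
    ∃ v ∉ Z.2, (∀ x, L.ρ x v ∈ Z.2) ∧ T ≤ Z.1.comap (L.Γ.flip v)

lemma HasCentralModulo.mono {T' : Submodule ℂ V1} (h : L.HasCentralModulo Z T) (hT : T' ≤ T) :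
    L.HasCentralModulo Z T' := by
  rcases h with ⟨a, haZ, ha, haT⟩ | ⟨v, hvZ, hv, hvT⟩
  · exact Or.inl ⟨a, haZ, ha, hT.trans haT⟩
  · exact Or.inr ⟨v, hvZ, hv, hT.trans hvT⟩

lemma ρ_central_of_central (hZ : Z ≤ L.normalizer Z) {a : V0} (ha : ∀ x, L.b0 x a ∈ Z.1)
    (haT : T ≤ Z.2.comap (L.ρ a)) {b : V1} (hb : ∀ x, L.ρ x b ∈ T) :
    (∀ x, L.ρ x (L.ρ a b) ∈ Z.2) ∧ T ⊔ Submodule.span ℂ {b} ≤ Z.1.comap (L.Γ.flip (L.ρ a b)) := by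
  have ha' : ∀ y, L.b0 a y ∈ Z.1 := fun y => L.b0_skew a y ▸ Z.1.neg_mem (ha y)
  refine ⟨fun x => ?_, sup_le (fun y hy => ?_) ?_⟩
  · rw [ρ_leibniz]
    exact Z.2.add_mem ((mem_normalizer_fst.mp (hZ.1 (ha x))).2 b) (haT (hb x))
  · have hayb : L.Γ (L.ρ a y) b ∈ Z.1 := L.Γ_symm _ _ ▸ (mem_normalizer_snd.mp (hZ.2 (haT hy))).2 b
    rw [Submodule.mem_comap, LinearMap.flip_apply, ← Z.1.add_mem_iff_right hayb, ← L.jacobi011]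
    exact ha' _
  · rw [Submodule.span_singleton_le_iff_mem, Submodule.mem_comap, LinearMap.flip_apply]
    refine Submodule.mem_of_add_self_mem ?_
    nth_rewrite 1 [L.Γ_symm]
    rw [← L.jacobi011]
    exact ha' _

lemma Γ_central_of_central (hZ : Z ≤ L.normalizer Z) {v : V1} (hv : ∀ x, L.ρ x v ∈ Z.2)
    (hvT : T ≤ Z.1.comap (L.Γ.flip v)) {b : V1} (hb : ∀ x, L.ρ x b ∈ T) :
    (∀ x, L.b0 x (L.Γ b v) ∈ Z.1) ∧ T ⊔ Submodule.span ℂ {b} ≤ Z.2.comap (L.ρ (L.Γ b v)) := by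
  refine ⟨fun x => ?_, sup_le (fun y hy => ?_) ?_⟩
  · rw [L.jacobi011]
    exact Z.1.add_mem (hvT (hb x)) ((mem_normalizer_snd.mp (hZ.2 (hv x))).2 b)
  · have hvyb : L.ρ (L.Γ v y) b ∈ Z.2 :=
      (mem_normalizer_fst.mp (hZ.1 (L.Γ_symm y v ▸ hvT hy))).2 b
    have h := L.jacobi111 b v y ▸ Z.2.zero_mem
    rwa [Z.2.add_mem_iff_left (hv _), Z.2.add_mem_iff_left hvyb] at h
  · rw [Submodule.span_singleton_le_iff_mem, Submodule.mem_comap]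
    have h := L.jacobi111 b v b ▸ Z.2.zero_mem
    rw [Z.2.add_mem_iff_left (hv _), L.Γ_symm v b] at h
    exact Submodule.mem_of_add_self_mem h

lemma HasCentralModulo.sup_span_singleton (hZ : Z ≤ L.normalizer Z) (h : L.HasCentralModulo Z T)
    {b : V1} (hb : ∀ x, L.ρ x b ∈ T) : L.HasCentralModulo Z (T ⊔ Submodule.span ℂ {b}) := by
  rcases h with ⟨a, haZ, ha, haT⟩ | ⟨v, hvZ, hv, hvT⟩
  · by_cases hab : L.ρ a b ∈ Z.2
    · exact Or.inl ⟨a, haZ, ha, sup_le haT ((Submodule.span_singleton_le_iff_mem _ _).mpr hab)⟩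
    · exact Or.inr ⟨_, hab, ρ_central_of_central hZ ha haT hb⟩
  · by_cases hbv : L.Γ b v ∈ Z.1
    · exact Or.inr ⟨v, hvZ, hv, sup_le hvT ((Submodule.span_singleton_le_iff_mem _ _).mpr hbv)⟩
    · exact Or.inl ⟨_, hbv, Γ_central_of_central hZ hv hvT hb⟩

lemma HasCentralModulo.sup_span (hZ : Z ≤ L.normalizer Z) (h : L.HasCentralModulo Z T)
    (s : Finset V1) (hs : ∀ b ∈ s, ∀ x, L.ρ x b ∈ T) :
    L.HasCentralModulo Z (T ⊔ Submodule.span ℂ s) := by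
  classical
  induction s using Finset.induction_on with
  | empty => simpa using h
  | insert b s _ ih =>
    have ih := ih fun c hc => hs c (Finset.mem_insert_of_mem hc)
    have hb : ∀ x, L.ρ x b ∈ T ⊔ Submodule.span ℂ s :=
      fun x => Submodule.mem_sup_left (hs b (Finset.mem_insert_self b s) x)
    rw [Finset.coe_insert, Submodule.span_insert, sup_left_comm, sup_comm (Submodule.span ℂ {b})]
    exact ih.sup_span_singleton hZ hb

lemma HasCentralModulo.of_forall_ρ_mem [FiniteDimensional ℂ V1] (hZ : Z ≤ L.normalizer Z)
    (h : L.HasCentralModulo Z T) {T' : Submodule ℂ V1} (hT' : ∀ b ∈ T', ∀ x, L.ρ x b ∈ T) :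
    L.HasCentralModulo Z T' := by
  obtain ⟨s, rfl⟩ := IsNoetherian.noetherian T'
  exact (h.sup_span hZ s fun b hb => hT' b (Submodule.subset_span hb)).mono le_sup_right

end CentralModulo

section Engel

def EvenPart (_L : SuperBracket V0 V1) : Type _ := V0

def OddPart (_L : SuperBracket V0 V1) : Type _ := V1

instance : AddCommGroup L.EvenPart := inferInstanceAs (AddCommGroup V0)
instance : Module ℂ L.EvenPart := inferInstanceAs (Module ℂ V0)
instance [FiniteDimensional ℂ V0] : FiniteDimensional ℂ L.EvenPart :=
  inferInstanceAs (FiniteDimensional ℂ V0)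
instance : AddCommGroup L.OddPart := inferInstanceAs (AddCommGroup V1)
instance : Module ℂ L.OddPart := inferInstanceAs (Module ℂ V1)
instance [FiniteDimensional ℂ V1] : FiniteDimensional ℂ L.OddPart :=
  inferInstanceAs (FiniteDimensional ℂ V1)

instance : LieRing L.EvenPart :=
  { (inferInstance : AddCommGroup L.EvenPart) with
    bracket := fun x y => L.b0 x y
    add_lie := fun x y z => L.b0.map_add₂ x y z
    lie_add := fun x y z => (L.b0 x).map_add y z
    lie_self := L.b0_self
    leibniz_lie := L.b0_leibniz }

instance : LieAlgebra ℂ L.EvenPart where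
  lie_smul t x y := (L.b0 x).map_smul t y

instance : LieRingModule L.EvenPart L.OddPart where
  bracket x v := L.ρ x v
  add_lie x y v := L.ρ.map_add₂ x y v
  lie_add x v w := (L.ρ x).map_add v w
  leibniz_lie := L.ρ_leibniz

instance : LieModule ℂ L.EvenPart L.OddPart where
  smul_lie t x v := L.ρ.map_smul₂ t x v
  lie_smul t x v := (L.ρ x).map_smul t v

variable {L}

lemma isNilpotent_evenPart [FiniteDimensional ℂ V0] (h0 : ∃ k, L.series0 k = ⊥) :
    LieModule.IsNilpotent L.EvenPart L.EvenPart := by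
  obtain ⟨k, hk⟩ := h0
  refine (LieModule.isNilpotent_iff_forall' (R := ℂ)).mpr fun x => ⟨k, LinearMap.ext fun a => ?_⟩
  have h := L.b0_pow_mem_series0 x k a
  rw [hk, Submodule.mem_bot] at h
  exact h

lemma isNilpotent_oddPart [FiniteDimensional ℂ V1]
    (hρ : ∀ x, _root_.IsNilpotent (L.ρ x : Module.End ℂ V1)) :
    LieModule.IsNilpotent L.EvenPart L.OddPart := by
  rw [LieModule.isNilpotent_iff_forall' (R := ℂ)]
  exact hρ

lemma exists_b0_mem_of_ne_top [FiniteDimensional ℂ V0] (h0 : ∃ k, L.series0 k = ⊥)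
    {W : Submodule ℂ V0} (hW : ∀ x, ∀ a ∈ W, L.b0 x a ∈ W) (hne : W ≠ ⊤) :
    ∃ a ∉ W, ∀ x, L.b0 x a ∈ W := by
  have := isNilpotent_evenPart h0
  let N : LieSubmodule ℂ L.EvenPart L.EvenPart := { W with lie_mem := fun {x a} => hW x a }
  have hN : N ≠ ⊤ := fun h => hne (by rw [← LieSubmodule.toSubmodule_eq_top] at h; exact h)
  obtain ⟨a, ha, haN⟩ := SetLike.exists_of_lt (LieSubmodule.lt_normalizer_of_ne_top hN)
  exact ⟨a, haN, ha⟩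

lemma exists_ρ_mem_of_ne_top [FiniteDimensional ℂ V1]
    (hρ : ∀ x, _root_.IsNilpotent (L.ρ x : Module.End ℂ V1))
    {W : Submodule ℂ V1} (hW : ∀ x, ∀ v ∈ W, L.ρ x v ∈ W) (hne : W ≠ ⊤) :
    ∃ v ∉ W, ∀ x, L.ρ x v ∈ W := by
  have := isNilpotent_oddPart hρ
  let N : LieSubmodule ℂ L.EvenPart L.OddPart := { W with lie_mem := fun {x v} => hW x v }
  have hN : N ≠ ⊤ := fun h => hne (by rw [← LieSubmodule.toSubmodule_eq_top] at h; exact h)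
  obtain ⟨v, hv, hvN⟩ := SetLike.exists_of_lt (LieSubmodule.lt_normalizer_of_ne_top hN)
  exact ⟨v, hvN, hv⟩

end Engel

section Nilpotency

variable [FiniteDimensional ℂ V0] [FiniteDimensional ℂ V1] {L}
  {Z : Submodule ℂ V0 × Submodule ℂ V1}

lemma hasCentralModulo_bot (h0 : ∃ k, L.series0 k = ⊥)
    (hρ : ∀ x, _root_.IsNilpotent (L.ρ x : Module.End ℂ V1))
    (hZ : Z ≤ L.normalizer Z) (hne : Z ≠ ⊤) : L.HasCentralModulo Z ⊥ := by
  by_cases hZ1 : Z.1 = ⊤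
  · have hZ2 : Z.2 ≠ ⊤ := fun hZ2 => hne (Prod.ext hZ1 hZ2)
    obtain ⟨v, hvZ, hv⟩ :=
      exists_ρ_mem_of_ne_top hρ (fun x _ hv => (mem_normalizer_snd.mp (hZ.2 hv)).1 x) hZ2
    exact Or.inr ⟨v, hvZ, hv, bot_le⟩
  · obtain ⟨a, haZ, ha⟩ :=
      exists_b0_mem_of_ne_top h0 (fun x _ ha => (mem_normalizer_fst.mp (hZ.1 ha)).1 x) hZ1
    exact Or.inl ⟨a, haZ, ha, bot_le⟩

lemma hasCentralModulo_top (h0 : ∃ k, L.series0 k = ⊥)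
    (hρ : ∀ x, _root_.IsNilpotent (L.ρ x : Module.End ℂ V1))
    (hZ : Z ≤ L.normalizer Z) (hne : Z ≠ ⊤) : L.HasCentralModulo Z ⊤ := by
  obtain ⟨n, hn⟩ := (LieModule.isNilpotent_iff_exists_ucs_eq_top ℂ).mp (isNilpotent_oddPart hρ)
  have key : ∀ k, L.HasCentralModulo Z
      ((⊥ : LieSubmodule ℂ L.EvenPart L.OddPart).ucs k).toSubmodule := by
    intro k
    induction k with
    | zero => exact hasCentralModulo_bot h0 hρ hZ hne
    | succ k ih =>
      refine ih.of_forall_ρ_mem hZ fun b hb x => ?_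
      rw [LieSubmodule.ucs_succ] at hb
      exact hb x
  have h := key n
  rw [hn, LieSubmodule.top_toSubmodule] at h
  exact h

lemma lt_normalizer_of_ne_top (h0 : ∃ k, L.series0 k = ⊥)
    (hρ : ∀ x, _root_.IsNilpotent (L.ρ x : Module.End ℂ V1))
    (hZ : Z ≤ L.normalizer Z) (hne : Z ≠ ⊤) : Z < L.normalizer Z := by
  refine hZ.lt_of_ne fun h => ?_
  rcases hasCentralModulo_top h0 hρ hZ hne with ⟨a, haZ, ha, haT⟩ | ⟨v, hvZ, hv, hvT⟩
  · apply haZ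
    rw [h, mem_normalizer_fst]
    exact ⟨ha, fun u => haT Submodule.mem_top⟩
  · apply hvZ
    rw [h, mem_normalizer_snd]
    exact ⟨hv, fun u => hvT Submodule.mem_top⟩

lemma exists_ucs_eq_top (h0 : ∃ k, L.series0 k = ⊥)
    (hρ : ∀ x, _root_.IsNilpotent (L.ρ x : Module.End ℂ V1)) : ∃ n, L.ucs n = ⊤ := by
  obtain ⟨n, hn⟩ := WellFoundedGT.monotone_chain_condition ⟨L.ucs, L.monotone_ucs⟩
  by_contra! hne
  exact (lt_normalizer_of_ne_top h0 hρ (L.monotone_ucs n.le_succ) (hne n)).ne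
    (hn (n + 1) n.le_succ)

end Nilpotency

end SuperBracket

/-- A finite-dimensional complex Lie superalgebra is nilpotent iff its even
part is a nilpotent Lie algebra and every `ρ(x)`, `x` even, is a nilpotent
endomorphism of the odd part. -/
theorem stmt7 {V0 V1 : Type*} [AddCommGroup V0] [Module ℂ V0]
    [AddCommGroup V1] [Module ℂ V1]
    [FiniteDimensional ℂ V0] [FiniteDimensional ℂ V1]
    (L : SuperBracket V0 V1) :
    L.IsNilpotent ↔
      ((∃ k, L.series0 k = ⊥) ∧ ∀ x : V0, IsNilpotent (L.ρ x : Module.End ℂ V1)) := by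
  constructor
  · rintro ⟨k, hk⟩
    refine ⟨⟨k, le_bot_iff.mp ?_⟩, fun x => ⟨k, LinearMap.ext fun v => ?_⟩⟩
    · simpa [hk] using L.series0_le_series_fst k
    · simpa [hk] using L.ρ_pow_mem_series_snd x k v
  · rintro ⟨h0, hρ⟩
    obtain ⟨n, hn⟩ := SuperBracket.exists_ucs_eq_top h0 hρ
    exact ⟨n, le_bot_iff.mp (L.series_le_ucs n 0 hn)⟩
end

section
/- Let $\mathfrak{g}_t$ be the Lie superalgebra on $\mathbb{C}^{1|2}$ with even basis $e_1$, odd basis $f_1,f_2$ and nonzero brackets $[e_1,f_2]=f_1$ and $[e_1,f_1]=tf_2$. Then for every $t\neq 0$, $\mathfrak{g}_t$ is not nilpotent: indeed $\mathfrak{g}_t^k=\mathrm{Span}\{f_1,f_2\}$ for all $k\geq 1$. -/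

noncomputable def myρ (t : ℂ) : ℂ →ₗ[ℂ] (Fin 2 → ℂ) →ₗ[ℂ] (Fin 2 → ℂ) :=
  LinearMap.mk₂ ℂ (fun x u => ![x * u 1, t * (x * u 0)])
    (by intro x y u; funext i; fin_cases i <;> simp <;> ring)
    (by intro c x u; funext i; fin_cases i <;> simp <;> ring)
    (by intro x u v; funext i; fin_cases i <;> simp [mul_add])
    (by intro c x u; funext i; fin_cases i <;> simp <;> ring)

lemma span_rho_top (t : ℂ) (ht : t ≠ 0) (L : SuperBracket ℂ (Fin 2 → ℂ))
    (hρ : ∀ (x : ℂ) (u : Fin 2 → ℂ), L.ρ x u = ![x * u 1, t * (x * u 0)])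
    (A : Submodule ℂ ℂ) (B : Submodule ℂ (Fin 2 → ℂ)) (hB : B = ⊤) :
    Submodule.span ℂ {z | ∃ x v, (x ∈ A ∨ v ∈ B) ∧ z = L.ρ x v} = ⊤ := by
  subst hB
  rw [Submodule.eq_top_iff']
  intro u
  have h1 : (![(1:ℂ), 0] : Fin 2 → ℂ) ∈
      Submodule.span ℂ {z | ∃ x v, (x ∈ A ∨ v ∈ (⊤ : Submodule ℂ (Fin 2 → ℂ))) ∧ z = L.ρ x v} := by
    apply Submodule.subset_span
    refine ⟨1, ![0, 1], Or.inr trivial, ?_⟩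
    rw [hρ]; funext i; fin_cases i <;> simp
  have h2 : (![(0:ℂ), 1] : Fin 2 → ℂ) ∈
      Submodule.span ℂ {z | ∃ x v, (x ∈ A ∨ v ∈ (⊤ : Submodule ℂ (Fin 2 → ℂ))) ∧ z = L.ρ x v} := by
    have h2' : (![(0:ℂ), t] : Fin 2 → ℂ) ∈
        Submodule.span ℂ {z | ∃ x v, (x ∈ A ∨ v ∈ (⊤ : Submodule ℂ (Fin 2 → ℂ))) ∧ z = L.ρ x v} := by
      apply Submodule.subset_span
      refine ⟨1, ![1, 0], Or.inr trivial, ?_⟩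
      rw [hρ]; funext i; fin_cases i <;> simp
    have := Submodule.smul_mem _ t⁻¹ h2'
    convert this using 1
    funext i; fin_cases i <;> simp [ht]
  have : u = u 0 • ![(1:ℂ), 0] + u 1 • ![(0:ℂ), 1] := by
    funext i; fin_cases i <;> simp
  rw [this]
  exact Submodule.add_mem _ (Submodule.smul_mem _ _ h1) (Submodule.smul_mem _ _ h2)

lemma span_even_bot (L : SuperBracket ℂ (Fin 2 → ℂ)) (hb : L.b0 = 0) (hΓ : L.Γ = 0)
    (A : Submodule ℂ ℂ) (B : Submodule ℂ (Fin 2 → ℂ)) :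
    Submodule.span ℂ ({z | ∃ x y, y ∈ A ∧ z = L.b0 x y} ∪
        {z | ∃ u v, v ∈ B ∧ z = L.Γ u v}) = ⊥ := by
  rw [Submodule.span_eq_bot]
  rintro z (⟨x, y, -, rfl⟩ | ⟨u, v, -, rfl⟩) <;> simp [hb, hΓ]

/-- The Lie superalgebra on `ℂ^{1|2}` with `[e₁,f₂] = f₁`, `[e₁,f₁] = t f₂`
exists (the super Jacobi identity holds) and, for `t ≠ 0`, is not nilpotent:
`𝔤ᵏ = Span{f₁,f₂}` for all `k ≥ 1`. -/
theorem stmt8 (t : ℂ) (ht : t ≠ 0) :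
    (∃ L : SuperBracket ℂ (Fin 2 → ℂ),
        L.b0 = 0 ∧ L.Γ = 0 ∧ ∀ (x : ℂ) (u : Fin 2 → ℂ),
          L.ρ x u = ![x * u 1, t * (x * u 0)]) ∧
    ∀ L : SuperBracket ℂ (Fin 2 → ℂ),
      (L.b0 = 0 ∧ L.Γ = 0 ∧ ∀ (x : ℂ) (u : Fin 2 → ℂ),
          L.ρ x u = ![x * u 1, t * (x * u 0)]) →
        (¬ L.IsNilpotent ∧ ∀ k, 1 ≤ k →
          L.series k = (⊥, (⊤ : Submodule ℂ (Fin 2 → ℂ)))) := by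
  have exL : ∃ L : SuperBracket ℂ (Fin 2 → ℂ),
      L.b0 = 0 ∧ L.Γ = 0 ∧ ∀ (x : ℂ) (u : Fin 2 → ℂ),
        L.ρ x u = ![x * u 1, t * (x * u 0)] := by
    refine ⟨⟨0, myρ t, 0, by simp, by simp, by simp, ?_, by simp, by simp⟩, rfl, rfl,
      fun x u => rfl⟩
    intro x y u
    funext i
    fin_cases i <;> simp [myρ] <;> ring
  refine ⟨exL, ?_⟩
  rintro L ⟨hb, hΓ, hρ⟩
  have hser : ∀ k, 1 ≤ k → L.series k = (⊥, (⊤ : Submodule ℂ (Fin 2 → ℂ))) := by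
    intro k hk
    obtain ⟨m, rfl⟩ := Nat.exists_eq_add_of_le hk
    induction m with
    | zero =>
      rw [SuperBracket.series]
      exact Prod.ext (span_even_bot L hb hΓ _ _)
        (span_rho_top t ht L hρ _ _ (by rw [SuperBracket.series]))
    | succ n ih =>
      rw [show 1 + (n + 1) = (1 + n) + 1 by ring, SuperBracket.series]
      exact Prod.ext (span_even_bot L hb hΓ _ _)
        (span_rho_top t ht L hρ _ _ (by rw [ih (by omega)]))
  refine ⟨?_, hser⟩
  rintro ⟨k, hknil⟩
  rcases Nat.eq_zero_or_pos k with rfl | hk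
  · rw [SuperBracket.series] at hknil
    have : (⊤ : Submodule ℂ (Fin 2 → ℂ)) = ⊥ := congrArg Prod.snd hknil
    exact absurd (this ▸ Submodule.mem_top (x := ![(1:ℂ),0]))
      (by intro h; simpa using congrFun ((Submodule.mem_bot ℂ).mp h) 0)
  · rw [hser k hk] at hknil
    have : (⊤ : Submodule ℂ (Fin 2 → ℂ)) = ⊥ := congrArg Prod.snd hknil
    exact absurd (this ▸ Submodule.mem_top (x := ![(1:ℂ),0]))
      (by intro h; simpa using congrFun ((Submodule.mem_bot ℂ).mp h) 0)
end

section
/- Let $\mathfrak{g}_t$ be the Lie superalgebra of dimension $(2|2)$ with even basis $e_1,e_2$, odd basis $f_1,f_2$ and nonzero brackets $[e_2,f_2]=f_1$, $[f_2,f_2]=e_1$, $[e_2,f_1]=tf_2$, $[f_1,f_1]=-te_1$. Then for $t\neq 0$, $\mathfrak{g}_t$ is a Lie superalgebra that is not nilpotent, and $\mathfrak{g}_t^k=\mathrm{Span}\{e_1,f_1,f_2\}$ for all $k\geq 1$. -/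
set_option linter.unnecessarySeqFocus false

noncomputable def ρt (t : ℂ) : (Fin 2 → ℂ) →ₗ[ℂ] (Fin 2 → ℂ) →ₗ[ℂ] (Fin 2 → ℂ) :=
  LinearMap.mk₂ ℂ (fun x u => ![x 1 * u 1, t * (x 1 * u 0)])
    (by intro x x' u; funext i; fin_cases i <;> simp <;> ring)
    (by intro c x u; funext i; fin_cases i <;> simp <;> ring)
    (by intro x u u'; funext i; fin_cases i <;> simp <;> ring)
    (by intro c x u; funext i; fin_cases i <;> simp <;> ring)

noncomputable def Γt (t : ℂ) : (Fin 2 → ℂ) →ₗ[ℂ] (Fin 2 → ℂ) →ₗ[ℂ] (Fin 2 → ℂ) :=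
  LinearMap.mk₂ ℂ (fun u v => ![u 1 * v 1 - t * (u 0 * v 0), 0])
    (by intro x x' u; funext i; fin_cases i <;> simp <;> ring)
    (by intro c x u; funext i; fin_cases i <;> simp <;> ring)
    (by intro x u u'; funext i; fin_cases i <;> simp <;> ring)
    (by intro c x u; funext i; fin_cases i <;> simp <;> ring)

noncomputable def Lt (t : ℂ) : SuperBracket (Fin 2 → ℂ) (Fin 2 → ℂ) where
  b0 := 0
  ρ := ρt t
  Γ := Γt t
  b0_skew := by intro x y; simp
  Γ_symm := by intro u v; funext i; fin_cases i <;> simp [Γt] <;> ring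
  jacobi00 := by intro x y z; simp
  jacobi001 := by
    intro x y u; funext i; fin_cases i <;> simp [ρt] <;> ring
  jacobi011 := by
    intro x u v; funext i; fin_cases i <;> simp [ρt, Γt] <;> ring
  jacobi111 := by
    intro u v w; funext i; fin_cases i <;> simp [ρt, Γt] <;> ring

/-- The Lie superalgebra of dimension `(2|2)` with `[e₂,f₂] = f₁`,
`[f₂,f₂] = e₁`, `[e₂,f₁] = t f₂`, `[f₁,f₁] = -t e₁` exists, and for `t ≠ 0`
it is not nilpotent: `𝔤ᵏ = Span{e₁,f₁,f₂}` for all `k ≥ 1`. -/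
theorem stmt9 (t : ℂ) (ht : t ≠ 0) :
    (∃ L : SuperBracket (Fin 2 → ℂ) (Fin 2 → ℂ),
        L.b0 = 0 ∧
        (∀ x u : Fin 2 → ℂ, L.ρ x u = ![x 1 * u 1, t * (x 1 * u 0)]) ∧
        (∀ u v : Fin 2 → ℂ, L.Γ u v = ![u 1 * v 1 - t * (u 0 * v 0), 0])) ∧
    ∀ L : SuperBracket (Fin 2 → ℂ) (Fin 2 → ℂ),
      (L.b0 = 0 ∧
        (∀ x u : Fin 2 → ℂ, L.ρ x u = ![x 1 * u 1, t * (x 1 * u 0)]) ∧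
        (∀ u v : Fin 2 → ℂ, L.Γ u v = ![u 1 * v 1 - t * (u 0 * v 0), 0])) →
      (¬ L.IsNilpotent ∧ ∀ k, 1 ≤ k →
        L.series k =
          (Submodule.span ℂ {(Pi.single 0 1 : Fin 2 → ℂ)},
            (⊤ : Submodule ℂ (Fin 2 → ℂ)))) := by
  constructor
  · exact ⟨Lt t, rfl, fun x u => rfl, fun u v => rfl⟩
  · rintro L ⟨hb0, hρ, hΓ⟩
    -- key step lemma
    have step : ∀ k, (L.series k).2 = ⊤ →
        L.series (k+1) = (Submodule.span ℂ {(Pi.single 0 1 : Fin 2 → ℂ)}, ⊤) := by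
      intro k hk2
      rw [SuperBracket.series]
      refine Prod.ext ?_ ?_
      · -- first component
        simp only
        apply le_antisymm
        · rw [Submodule.span_le]
          rintro z (⟨x, y, -, rfl⟩ | ⟨u, v, -, rfl⟩)
          · simp [hb0]
          · rw [hΓ]
            have : (![u 1 * v 1 - t * (u 0 * v 0), 0] : Fin 2 → ℂ)
                = (u 1 * v 1 - t * (u 0 * v 0)) • (Pi.single 0 1 : Fin 2 → ℂ) := by
              funext i; fin_cases i <;> simp [Pi.single_apply]
            rw [this]
            exact Submodule.smul_mem _ _ (Submodule.subset_span rfl)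
        · rw [Submodule.span_le]
          rintro z rfl
          apply Submodule.subset_span
          right
          refine ⟨![0,1], ![0,1], by rw [hk2]; trivial, ?_⟩
          rw [hΓ]
          funext i; fin_cases i <;> simp [Pi.single_apply]
      · -- second component is ⊤
        simp only
        rw [eq_top_iff]
        intro w _
        have h1 : (Pi.single 0 1 : Fin 2 → ℂ) ∈ Submodule.span ℂ
            {z | ∃ x v, (x ∈ (L.series k).1 ∨ v ∈ (L.series k).2) ∧ z = L.ρ x v} := by
          apply Submodule.subset_span
          refine ⟨![0,1], ![0,1], Or.inr (by rw [hk2]; trivial), ?_⟩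
          rw [hρ]; funext i; fin_cases i <;> simp [Pi.single_apply]
        have h2 : (Pi.single 1 1 : Fin 2 → ℂ) ∈ Submodule.span ℂ
            {z | ∃ x v, (x ∈ (L.series k).1 ∨ v ∈ (L.series k).2) ∧ z = L.ρ x v} := by
          have hm : (![(0:ℂ), t] : Fin 2 → ℂ) ∈ Submodule.span ℂ
              {z | ∃ x v, (x ∈ (L.series k).1 ∨ v ∈ (L.series k).2) ∧ z = L.ρ x v} := by
            apply Submodule.subset_span
            refine ⟨![0,1], ![1,0], Or.inr (by rw [hk2]; trivial), ?_⟩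
            rw [hρ]; funext i; fin_cases i <;> simp
          have := Submodule.smul_mem _ t⁻¹ hm
          have he : t⁻¹ • (![(0:ℂ), t] : Fin 2 → ℂ) = Pi.single 1 1 := by
            funext i; fin_cases i <;> simp [Pi.single_apply]
            exact inv_mul_cancel₀ ht
          rwa [he] at this
        have hw : w = w 0 • (Pi.single 0 1 : Fin 2 → ℂ) + w 1 • (Pi.single 1 1 : Fin 2 → ℂ) := by
          funext i; fin_cases i <;> simp [Pi.single_apply]
        rw [hw]
        exact Submodule.add_mem _ (Submodule.smul_mem _ _ h1) (Submodule.smul_mem _ _ h2)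
    have hser : ∀ k, 1 ≤ k → L.series k =
        (Submodule.span ℂ {(Pi.single 0 1 : Fin 2 → ℂ)}, ⊤) := by
      intro k hk
      induction k with
      | zero => omega
      | succ n ih =>
        rcases Nat.eq_or_lt_of_le hk with h | h
        · have hn0 : n = 0 := by omega
          subst hn0
          exact step 0 rfl
        · have hn : 1 ≤ n := by omega
          exact step n (by rw [ih hn])
    refine ⟨?_, hser⟩
    rintro ⟨k, hk⟩
    rcases Nat.eq_zero_or_pos k with rfl | hpos
    · have : (⊤ : Submodule ℂ (Fin 2 → ℂ)) = ⊥ := congrArg Prod.fst hk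
      have h01 : (Pi.single 0 1 : Fin 2 → ℂ) ∈ (⊥ : Submodule ℂ (Fin 2 → ℂ)) := this ▸ trivial
      simp only [Submodule.mem_bot] at h01
      have := congrFun h01 0
      simp at this
    · have h2 := congrArg Prod.snd (hser k hpos)
      rw [hk] at h2
      have h3 : (⊥ : Submodule ℂ (Fin 2 → ℂ)) = (⊤ : Submodule ℂ (Fin 2 → ℂ)) := h2
      have : (Pi.single 0 1 : Fin 2 → ℂ) ∈ (⊥ : Submodule ℂ (Fin 2 → ℂ)) := by
        rw [h3]; trivial
      simp only [Submodule.mem_bot] at this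
      have := congrFun this 0
      simp at this
end

section
/- For the $(1|n)$-dimensional Heisenberg Lie superalgebra $\mathfrak{g}$ with brackets $[f_i,f_i]=e_1$ ($i=1,\dots,n$), the even part of the second cohomology with adjoint coefficients vanishes: every even $2$-cocycle is a coboundary, so $(H^2(\mathfrak{g},\mathfrak{g}))_0=0$. -/
/-- For the `(1|n)`-dimensional Heisenberg Lie superalgebra (even part `ℂ e₁`,
odd part `Span{f₁,…,fₙ}`, nonzero brackets `[fᵢ,fᵢ] = e₁`, i.e. even bracket
`B = 0`, action `P = 0`, and `Γ(u,v) = ∑ uᵢvᵢ`), every even Chevalley–Eilenberg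
`2`-cocycle with adjoint coefficients (components `φ₀₀, φ₀₁, φ₁₁`, with the
cocycle conditions `E1`–`E4` below) is the coboundary of an even `1`-cochain
`(ψ₀, ψ₁)`; hence `(H²(𝔤,𝔤))₀ = 0`. -/
theorem stmt11 (n : ℕ) (hn : 0 < n)
    (B : ℂ →ₗ[ℂ] ℂ →ₗ[ℂ] ℂ)
    (P : ℂ →ₗ[ℂ] (Fin n → ℂ) →ₗ[ℂ] (Fin n → ℂ))
    (G : (Fin n → ℂ) →ₗ[ℂ] (Fin n → ℂ) →ₗ[ℂ] ℂ)
    (hB : B = 0) (hP : P = 0)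
    (hG : ∀ u v, G u v = ∑ i, u i * v i)
    (φ00 : ℂ →ₗ[ℂ] ℂ →ₗ[ℂ] ℂ)
    (φ01 : ℂ →ₗ[ℂ] (Fin n → ℂ) →ₗ[ℂ] (Fin n → ℂ))
    (φ11 : (Fin n → ℂ) →ₗ[ℂ] (Fin n → ℂ) →ₗ[ℂ] ℂ)
    (hskew : ∀ x y, φ00 x y = - φ00 y x)
    (hsymm : ∀ u v, φ11 u v = φ11 v u)
    (E1 : ∀ x y z : ℂ,
      B x (φ00 y z) - B y (φ00 x z) + B z (φ00 x y)
        - φ00 (B x y) z + φ00 (B x z) y - φ00 (B y z) x = 0)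
    (E2 : ∀ (x y : ℂ) (u : Fin n → ℂ),
      P x (φ01 y u) - P y (φ01 x u) - P (φ00 x y) u
        - φ01 (B x y) u - φ01 y (P x u) + φ01 x (P y u) = 0)
    (E3 : ∀ (x : ℂ) (u v : Fin n → ℂ),
      B x (φ11 u v) - G u (φ01 x v) - G v (φ01 x u)
        - φ11 (P x u) v - φ11 (P x v) u - φ00 (G u v) x = 0)
    (E4 : ∀ u v w : Fin n → ℂ,
      P (φ11 v w) u + P (φ11 u w) v + P (φ11 u v) w
        + φ01 (G u v) w + φ01 (G u w) v + φ01 (G v w) u = 0) :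
    ∃ (ψ0 : ℂ →ₗ[ℂ] ℂ) (ψ1 : (Fin n → ℂ) →ₗ[ℂ] (Fin n → ℂ)),
      (∀ x y : ℂ, φ00 x y = B x (ψ0 y) - B y (ψ0 x) - ψ0 (B x y)) ∧
      (∀ (x : ℂ) (u : Fin n → ℂ),
        φ01 x u = P x (ψ1 u) + P (ψ0 x) u - ψ1 (P x u)) ∧
      (∀ u v : Fin n → ℂ,
        φ11 u v = G u (ψ1 v) + G v (ψ1 u) - ψ0 (G u v)) := by
  subst hB hP
  -- basis vectors
  set e : Fin n → (Fin n → ℂ) := fun i j => if i = j then 1 else 0 with he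
  have hGee : ∀ i, G (e i) (e i) = 1 := by
    intro i
    rw [hG]
    simp [he]
  -- φ00 = 0
  have hφ00 : ∀ x y : ℂ, φ00 x y = 0 := by
    intro x y
    have h1 : φ00 1 1 = 0 := by
      have h := hskew 1 1
      linear_combination h / 2
    have hx : φ00 x = x • φ00 1 := by
      simpa using map_smul φ00 x (1 : ℂ)
    have hy : (φ00 1) y = y * (φ00 1) 1 := by
      simpa using map_smul (φ00 1) y (1 : ℂ)
    rw [hx, LinearMap.smul_apply, hy, h1, mul_zero, smul_zero]
  -- φ01 = 0
  have hφ01e : ∀ i, φ01 1 (e i) = 0 := by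
    intro i
    have h := E4 (e i) (e i) (e i)
    simp only [LinearMap.zero_apply, zero_add, LinearMap.map_zero] at h
    rw [hGee i] at h
    have h3 : (3 : ℂ) • φ01 1 (e i) = 0 := by
      rw [show (3:ℂ) • φ01 1 (e i) = φ01 1 (e i) + φ01 1 (e i) + φ01 1 (e i) by
        module]
      simpa using h
    have := smul_eq_zero.mp h3
    rcases this with h | h
    · norm_num at h
    · exact h
  have hφ01 : ∀ x u, φ01 x u = 0 := by
    intro x u
    have h1 : φ01 1 u = 0 := by
      rw [LinearMap.pi_apply_eq_sum_univ (φ01 1) u]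
      have hz : ∀ i : Fin n, φ01 1 (fun j => if i = j then 1 else 0) = 0 := by
        intro i; simpa [he] using hφ01e i
      simp [hz]
    have : φ01 x u = x • φ01 1 u := by
      have : φ01 x = φ01 (x • 1) := by norm_num
      rw [this, map_smul]; rfl
    rw [this, h1, smul_zero]
  -- ψ1
  refine ⟨0, LinearMap.pi (fun i => (2⁻¹ : ℂ) • ((φ11.flip) (e i))), ?_, ?_, ?_⟩
  · intro x y; simp [hφ00]
  · intro x u; simp [hφ01]
  · intro u v
    have key : ∀ a b : Fin n → ℂ,
        G a (LinearMap.pi (fun i => (2⁻¹ : ℂ) • ((φ11.flip) (e i))) b)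
          = 2⁻¹ * φ11 b a := by
      intro a b
      rw [hG]
      have expand : φ11 b a = ∑ i, a i • φ11 b (e i) := by
        rw [LinearMap.pi_apply_eq_sum_univ (φ11 b) a]
      rw [expand, Finset.mul_sum]
      refine Finset.sum_congr rfl (fun i _ => ?_)
      simp [LinearMap.pi_apply, LinearMap.flip_apply, smul_eq_mul]
      ring
    rw [key u v, key v u, hsymm v u]
    simp
    ring
end

section
/- The Lie superalgebras $(1|2)_2$ (bracket $[f_1,f_2]=e_1$) and $(1|2)_3$ (bracket $[e_1,f_2]=f_1$) satisfy $\dim[\,(1|2)_2,(1|2)_2\,]_1=0$ while $\dim[\,(1|2)_3,(1|2)_3\,]_1=1$; consequently they are not isomorphic as Lie superalgebras. -/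
/-- The odd part of the derived ideal `[𝔤,𝔤]`. -/
def derived1 {V0 V1 : Type*} [AddCommGroup V0] [Module ℂ V0]
    [AddCommGroup V1] [Module ℂ V1] (L : SuperBracket V0 V1) : Submodule ℂ V1 :=
  Submodule.span ℂ {z | ∃ x v, z = L.ρ x v}


noncomputable def L2ex : SuperBracket ℂ (Fin 2 → ℂ) where
  b0 := 0
  ρ := 0
  Γ := LinearMap.mk₂ ℂ (fun u v => u 0 * v 1 + u 1 * v 0)
    (by intro u u' v; simp [Pi.add_apply]; ring)
    (by intro c u v; simp [Pi.smul_apply, smul_eq_mul]; ring)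
    (by intro u v v'; simp [Pi.add_apply]; ring)
    (by intro c u v; simp [Pi.smul_apply, smul_eq_mul]; ring)
  b0_skew := by intro x y; simp
  Γ_symm := by intro u v; simp [LinearMap.mk₂_apply]; ring
  jacobi00 := by intro x y z; simp
  jacobi001 := by intro x y u; simp
  jacobi011 := by intro x u v; simp
  jacobi111 := by intro u v w; simp

noncomputable def L3ex : SuperBracket ℂ (Fin 2 → ℂ) where
  b0 := 0
  Γ := 0
  ρ := LinearMap.mk₂ ℂ (fun x u => ![x * u 1, 0])
    (by intro x x' u; funext i; fin_cases i <;> simp <;> ring)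
    (by intro c x u; funext i; fin_cases i <;> simp [smul_eq_mul] <;> ring)
    (by intro x u u'; funext i; fin_cases i <;> simp [Pi.add_apply] <;> ring)
    (by intro c x u; funext i; fin_cases i <;> simp [Pi.smul_apply, smul_eq_mul] <;> ring)
  b0_skew := by intro x y; simp
  Γ_symm := by intro u v; simp
  jacobi00 := by intro x y z; simp
  jacobi001 := by
    intro x y u
    simp [LinearMap.mk₂_apply]
  jacobi011 := by intro x u v; simp
  jacobi111 := by
    intro u v w
    simp [LinearMap.mk₂_apply]

/-- `(1|2)₂` (`[f₁,f₂] = e₁`) and `(1|2)₃` (`[e₁,f₂] = f₁`) both exist, the odd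
parts of their derived ideals have dimensions `0` and `1` respectively, and
consequently they are not isomorphic as Lie superalgebras. -/
theorem stmt13 :
    (∃ L2 : SuperBracket ℂ (Fin 2 → ℂ),
        L2.b0 = 0 ∧ L2.ρ = 0 ∧
        ∀ u v : Fin 2 → ℂ, L2.Γ u v = u 0 * v 1 + u 1 * v 0) ∧
    (∃ L3 : SuperBracket ℂ (Fin 2 → ℂ),
        L3.b0 = 0 ∧ L3.Γ = 0 ∧
        ∀ (x : ℂ) (u : Fin 2 → ℂ), L3.ρ x u = ![x * u 1, 0]) ∧
    ∀ L2 L3 : SuperBracket ℂ (Fin 2 → ℂ),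
      (L2.b0 = 0 ∧ L2.ρ = 0 ∧
        ∀ u v : Fin 2 → ℂ, L2.Γ u v = u 0 * v 1 + u 1 * v 0) →
      (L3.b0 = 0 ∧ L3.Γ = 0 ∧
        ∀ (x : ℂ) (u : Fin 2 → ℂ), L3.ρ x u = ![x * u 1, 0]) →
      (Module.finrank ℂ (derived1 L2) = 0 ∧
       Module.finrank ℂ (derived1 L3) = 1 ∧
       ¬ ∃ (Φ0 : ℂ ≃ₗ[ℂ] ℂ) (Φ1 : (Fin 2 → ℂ) ≃ₗ[ℂ] (Fin 2 → ℂ)),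
          (∀ x y : ℂ, Φ0 (L2.b0 x y) = L3.b0 (Φ0 x) (Φ0 y)) ∧
          (∀ (x : ℂ) (u : Fin 2 → ℂ), Φ1 (L2.ρ x u) = L3.ρ (Φ0 x) (Φ1 u)) ∧
          (∀ u v : Fin 2 → ℂ, Φ0 (L2.Γ u v) = L3.Γ (Φ1 u) (Φ1 v))) := by
  refine ⟨⟨L2ex, rfl, rfl, fun u v => rfl⟩, ⟨L3ex, rfl, rfl, fun x u => rfl⟩, ?_⟩
  intro L2 L3 ⟨h2b, h2ρ, h2Γ⟩ ⟨h3b, h3Γ, h3ρ⟩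
  have hd2 : derived1 L2 = ⊥ := by
    rw [derived1, Submodule.span_eq_bot]
    rintro z ⟨x, v, rfl⟩
    simp [h2ρ]
  have hd3 : derived1 L3 = Submodule.span ℂ {![1, 0]} := by
    apply le_antisymm
    · rw [derived1, Submodule.span_le]
      rintro z ⟨x, v, rfl⟩
      rw [h3ρ]
      have : ![x * v 1, (0:ℂ)] = (x * v 1) • ![1, 0] := by
        funext i; fin_cases i <;> simp
      rw [this]
      exact Submodule.smul_mem _ _ (Submodule.subset_span rfl)
    · rw [Submodule.span_le, Set.singleton_subset_iff]
      refine Submodule.subset_span ⟨1, ![0, 1], ?_⟩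
      rw [h3ρ]; norm_num
  refine ⟨by rw [hd2]; exact finrank_bot ℂ _, ?_, ?_⟩
  · rw [hd3, finrank_span_singleton]
    intro h
    have := congrFun h 0
    simp at this
  · rintro ⟨Φ0, Φ1, -, hρ, -⟩
    have h := hρ (Φ0.symm 1) (Φ1.symm ![0, 1])
    rw [h2ρ] at h
    simp only [LinearMap.zero_apply, map_zero, LinearEquiv.apply_symm_apply] at h
    rw [h3ρ] at h
    have := congrFun h 0
    norm_num at this
end

section
/- Consider the $(4|1)$-dimensional Lie superalgebras $(4|1)_6$ with brackets $[e_1,e_2]=e_3$, $[e_1,e_3]=e_4$, $[f_1,f_1]=e_4$, and $(4|1)_4$ with brackets $[e_1,e_2]=e_3$, $[f_1,f_1]=e_4$. Then the family of basis changes $x_1=te_1$, $x_2=t^{-1}e_2$, $x_3=e_3$, $x_4=e_4$, $y_1=f_1$ applied to $(4|1)_6$ yields structure constants converging, as $t\to 0$, to those of $(4|1)_4$; i.e. $[x_1,x_2]=x_3$, $[x_1,x_3]=t\,x_4$, $[y_1,y_1]=x_4$. -/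
/-- Even-even structure constants of `(4|1)₆`: `[e₁,e₂] = e₃`, `[e₁,e₃] = e₄`. -/
def b₆ (u v : Fin 4 → ℂ) : Fin 4 → ℂ :=
  ![0, 0, u 0 * v 1 - u 1 * v 0, u 0 * v 2 - u 2 * v 0]

/-- Odd-odd structure constants of `(4|1)₆`: `[f₁,f₁] = e₄`. -/
def Γ₆ (s r : ℂ) : Fin 4 → ℂ := ![0, 0, 0, s * r]

/-- Even-even structure constants of `(4|1)₄`: `[e₁,e₂] = e₃`. -/
def b₄ (u v : Fin 4 → ℂ) : Fin 4 → ℂ :=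
  ![0, 0, u 0 * v 1 - u 1 * v 0, 0]

/-- Odd-odd structure constants of `(4|1)₄`: `[f₁,f₁] = e₄`. -/
def Γ₄ (s r : ℂ) : Fin 4 → ℂ := ![0, 0, 0, s * r]

/-- The standard basis of the even part. -/
def e (i : Fin 4) : Fin 4 → ℂ := Pi.single i 1

/-! The rescaled brackets are `[x₁,x₂] = e₃` and `[x₁,x₃] = t • e₄` by bilinearity of `b₆`;
only the second depends on `t`, and it vanishes in the limit, which is exactly the missing
bracket `[e₁,e₃] = 0` of `(4|1)₄`. -/

lemma b₆_smul_left (c : ℂ) (u v : Fin 4 → ℂ) : b₆ (c • u) v = c • b₆ u v := by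
  funext i; fin_cases i <;> simp [b₆] <;> ring

lemma b₆_smul_right (c : ℂ) (u v : Fin 4 → ℂ) : b₆ u (c • v) = c • b₆ u v := by
  funext i; fin_cases i <;> simp [b₆] <;> ring

lemma b₆_e_zero_e_one : b₆ (e 0) (e 1) = e 2 := by
  funext i; fin_cases i <;> simp [b₆, e]

lemma b₆_e_zero_e_two : b₆ (e 0) (e 2) = e 3 := by
  funext i; fin_cases i <;> simp [b₆, e]

lemma b₄_e_zero_e_one : b₄ (e 0) (e 1) = e 2 := by
  funext i; fin_cases i <;> simp [b₄, e]

lemma b₄_e_zero_e_two : b₄ (e 0) (e 2) = 0 := by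
  funext i; fin_cases i <;> simp [b₄, e]

lemma Γ₆_one_one : Γ₆ 1 1 = e 3 := by
  funext i; fin_cases i <;> simp [Γ₆, e]

lemma Γ₄_one_one : Γ₄ 1 1 = e 3 := Γ₆_one_one

lemma b₆_rescaled_e_zero_e_one {t : ℂ} (ht : t ≠ 0) : b₆ (t • e 0) (t⁻¹ • e 1) = e 2 := by
  rw [b₆_smul_left, b₆_smul_right, smul_smul, mul_inv_cancel₀ ht, one_smul, b₆_e_zero_e_one]

lemma b₆_rescaled_e_zero_e_two (t : ℂ) : b₆ (t • e 0) (e 2) = t • e 3 := by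
  rw [b₆_smul_left, b₆_e_zero_e_two]

/-- The degeneration `(4|1)₆ → (4|1)₄`: the basis change `x₁ = t e₁`,
`x₂ = t⁻¹ e₂`, `x₃ = e₃`, `x₄ = e₄`, `y₁ = f₁` gives `[x₁,x₂] = x₃`,
`[x₁,x₃] = t x₄`, `[y₁,y₁] = x₄`, whose limit as `t → 0` is the set of
structure constants of `(4|1)₄`. -/
theorem stmt16 :
    (∀ t : ℂ, t ≠ 0 →
      b₆ (t • e 0) (t⁻¹ • e 1) = e 2 ∧
      b₆ (t • e 0) (e 2) = t • e 3 ∧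
      Γ₆ 1 1 = e 3) ∧
    Filter.Tendsto
      (fun t : ℂ => (b₆ (t • e 0) (t⁻¹ • e 1), b₆ (t • e 0) (e 2), Γ₆ 1 1))
      (nhdsWithin 0 {t | t ≠ 0})
      (nhds (b₄ (e 0) (e 1), b₄ (e 0) (e 2), Γ₄ 1 1)) := by
  refine ⟨fun t ht => ⟨b₆_rescaled_e_zero_e_one ht, b₆_rescaled_e_zero_e_two t, Γ₆_one_one⟩, ?_⟩
  have h_eventually : (fun t : ℂ => (e 2, t • e 3, e 3)) =ᶠ[nhdsWithin 0 {t | t ≠ 0}]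
      fun t : ℂ => (b₆ (t • e 0) (t⁻¹ • e 1), b₆ (t • e 0) (e 2), Γ₆ 1 1) := by
    filter_upwards [self_mem_nhdsWithin] with t ht
    rw [b₆_rescaled_e_zero_e_one ht, b₆_rescaled_e_zero_e_two, Γ₆_one_one]
  have h_lim : Filter.Tendsto (fun t : ℂ => (e 2, t • e 3, e 3)) (nhds 0)
      (nhds (e 2, (0 : ℂ) • e 3, e 3)) :=
    (Continuous.prodMk continuous_const
      ((continuous_id.smul continuous_const).prodMk continuous_const)).tendsto 0
  rw [b₄_e_zero_e_one, b₄_e_zero_e_two, Γ₄_one_one, ← zero_smul ℂ (e 3)]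
  exact (h_lim.mono_left nhdsWithin_le_nhds).congr' h_eventually
end

section
/- The $(2|3)$-dimensional Lie superalgebra $(2|3)_{18}$ with brackets $[e_1,f_3]=f_1$, $[e_2,f_2]=f_1$, $[f_2,f_2]=2e_1$, $[f_2,f_3]=-e_2$ satisfies the super Jacobi identity and is nilpotent. -/

noncomputable def rho18 : (Fin 2 → ℂ) →ₗ[ℂ] (Fin 3 → ℂ) →ₗ[ℂ] (Fin 3 → ℂ) :=
  LinearMap.mk₂ ℂ (fun x u => ![x 0 * u 2 + x 1 * u 1, 0, 0])
    (by intro x y u; funext i; fin_cases i <;> simp <;> ring)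
    (by intro c x u; funext i; fin_cases i <;> simp <;> ring)
    (by intro x u v; funext i; fin_cases i <;> simp <;> ring)
    (by intro c x u; funext i; fin_cases i <;> simp <;> ring)

noncomputable def gam18 : (Fin 3 → ℂ) →ₗ[ℂ] (Fin 3 → ℂ) →ₗ[ℂ] (Fin 2 → ℂ) :=
  LinearMap.mk₂ ℂ (fun u v => ![2 * (u 1 * v 1), -(u 1 * v 2 + u 2 * v 1)])
    (by intro x y u; funext i; fin_cases i <;> simp <;> ring)
    (by intro c x u; funext i; fin_cases i <;> simp <;> ring)
    (by intro x u v; funext i; fin_cases i <;> simp <;> ring)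
    (by intro c x u; funext i; fin_cases i <;> simp <;> ring)

@[simp] lemma rho18_apply (x : Fin 2 → ℂ) (u : Fin 3 → ℂ) :
    rho18 x u = ![x 0 * u 2 + x 1 * u 1, 0, 0] := rfl

@[simp] lemma gam18_apply (u v : Fin 3 → ℂ) :
    gam18 u v = ![2 * (u 1 * v 1), -(u 1 * v 2 + u 2 * v 1)] := rfl

noncomputable def L18 : SuperBracket (Fin 2 → ℂ) (Fin 3 → ℂ) where
  b0 := 0
  ρ := rho18
  Γ := gam18
  b0_skew := by intro x y; simp
  Γ_symm := by intro u v; funext i; fin_cases i <;> simp <;> ring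
  jacobi00 := by intro x y z; simp
  jacobi001 := by
    intro x y u; funext i; fin_cases i <;> simp <;> ring
  jacobi011 := by
    intro x u v; funext i; fin_cases i <;> simp <;> ring
  jacobi111 := by
    intro u v w; funext i; fin_cases i <;> simp <;> ring

/-- The Lie superalgebra `(2|3)₁₈` with `[e₁,f₃] = f₁`, `[e₂,f₂] = f₁`,
`[f₂,f₂] = 2e₁`, `[f₂,f₃] = -e₂` exists (super Jacobi holds) and is
nilpotent. -/
theorem stmt18 :
    (∃ L : SuperBracket (Fin 2 → ℂ) (Fin 3 → ℂ),
        L.b0 = 0 ∧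
        (∀ (x : Fin 2 → ℂ) (u : Fin 3 → ℂ),
          L.ρ x u = ![x 0 * u 2 + x 1 * u 1, 0, 0]) ∧
        (∀ u v : Fin 3 → ℂ,
          L.Γ u v = ![2 * (u 1 * v 1), -(u 1 * v 2 + u 2 * v 1)])) ∧
    ∀ L : SuperBracket (Fin 2 → ℂ) (Fin 3 → ℂ),
      (L.b0 = 0 ∧
        (∀ (x : Fin 2 → ℂ) (u : Fin 3 → ℂ),
          L.ρ x u = ![x 0 * u 2 + x 1 * u 1, 0, 0]) ∧
        (∀ u v : Fin 3 → ℂ,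
          L.Γ u v = ![2 * (u 1 * v 1), -(u 1 * v 2 + u 2 * v 1)])) →
      L.IsNilpotent := by
  constructor
  · exact ⟨L18, rfl, fun x u => rfl, fun u v => rfl⟩
  · rintro L ⟨hb, hρ, hΓ⟩
    -- K : odd vectors with components 1 and 2 zero
    set K : Submodule ℂ (Fin 3 → ℂ) :=
      LinearMap.ker (LinearMap.proj 1 : (Fin 3 → ℂ) →ₗ[ℂ] ℂ) ⊓
        LinearMap.ker (LinearMap.proj 2 : (Fin 3 → ℂ) →ₗ[ℂ] ℂ) with hK
    have hmemK : ∀ v : Fin 3 → ℂ, v ∈ K ↔ v 1 = 0 ∧ v 2 = 0 := by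
      intro v
      simp [hK, Submodule.mem_inf, LinearMap.mem_ker]
    have hρK : ∀ (x : Fin 2 → ℂ) (v : Fin 3 → ℂ), L.ρ x v ∈ K := by
      intro x v
      rw [hmemK, hρ]
      constructor <;> simp
    have hρ0 : ∀ (x : Fin 2 → ℂ) (v : Fin 3 → ℂ), v ∈ K → L.ρ x v = 0 := by
      intro x v hv
      rw [hmemK] at hv
      rw [hρ, hv.1, hv.2]
      funext i; fin_cases i <;> simp
    have hΓ0 : ∀ (u v : Fin 3 → ℂ), v ∈ K → L.Γ u v = 0 := by
      intro u v hv
      rw [hmemK] at hv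
      rw [hΓ, hv.1, hv.2]
      funext i; fin_cases i <;> simp
    have hodd : ∀ k, (L.series (k+1)).2 ≤ K := by
      intro k
      show Submodule.span ℂ _ ≤ K
      rw [Submodule.span_le]
      rintro z ⟨x, v, -, rfl⟩
      exact hρK x v
    have heven2 : ∀ k, (L.series (k+2)).1 = ⊥ := by
      intro k
      rw [eq_bot_iff]
      show Submodule.span ℂ _ ≤ ⊥
      rw [Submodule.span_le]
      rintro z (⟨x, y, -, rfl⟩ | ⟨u, v, hv, rfl⟩)
      · simp [hb]
      · simpa using hΓ0 u v (hodd k hv)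
    refine ⟨3, Prod.ext (heven2 1) ?_⟩
    rw [eq_bot_iff]
    show Submodule.span ℂ _ ≤ ⊥
    rw [Submodule.span_le]
    rintro z ⟨x, v, (hx | hv), rfl⟩
    · rw [heven2 0, Submodule.mem_bot] at hx
      subst hx
      simp
    · simpa using hρ0 x v (hodd 1 hv)
end

section
/- For odd $m$, the map on $\mathbb{C}^{2|m}$ defined by $[e_1,f_i]=f_{i+1}$ for $1\le i\le m-1$ and $[f_j,f_{m+1-j}]=(-1)^{j+1}e_2$ for $1\le j\le\tfrac{m+1}{2}$ (extended by super skew-symmetry, other brackets zero) defines a nilpotent Lie superalgebra $K^{2,m}$. -/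
namespace K2m
noncomputable section
variable (m : ℕ)

def S : (Fin m → ℂ) →ₗ[ℂ] (Fin m → ℂ) :=
  LinearMap.pi fun i =>
    if (i : ℕ) = 0 then 0
    else LinearMap.proj ⟨(i : ℕ) - 1, Nat.lt_of_le_of_lt (Nat.sub_le _ _) i.isLt⟩

lemma S_apply (v : Fin m → ℂ) (j : Fin m) :
    S m v j = if (j : ℕ) = 0 then 0
      else v ⟨(j : ℕ) - 1, Nat.lt_of_le_of_lt (Nat.sub_le _ _) j.isLt⟩ := by
  simp only [S, LinearMap.pi_apply]; split <;> simp

def c : (Fin m → ℂ) →ₗ[ℂ] (Fin m → ℂ) →ₗ[ℂ] ℂ :=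
  ∑ j : Fin m, ((-1 : ℂ) ^ (j : ℕ)) •
    (LinearMap.mul ℂ ℂ).compl₁₂ (LinearMap.proj j) (LinearMap.proj j.rev)

lemma c_apply (u v : Fin m → ℂ) :
    c m u v = ∑ j : Fin m, (-1 : ℂ) ^ (j : ℕ) * (u j * v j.rev) := by
  simp [c, LinearMap.sum_apply, LinearMap.compl₁₂_apply, mul_assoc]

lemma parity (hm : Odd m) (j : Fin m) :
    (-1 : ℂ) ^ ((j.rev : Fin m) : ℕ) = (-1 : ℂ) ^ (j : ℕ) := by
  have h1 : ((j.rev : Fin m) : ℕ) = m - 1 - (j : ℕ) := by rw [Fin.val_rev]; omega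
  rw [h1]
  have hev : Even (m - 1) := Nat.Odd.sub_odd hm odd_one
  have hj : (j : ℕ) ≤ m - 1 := by have := j.isLt; omega
  rcases Nat.even_or_odd (j : ℕ) with h | h
  · rw [Even.neg_one_pow h, Even.neg_one_pow ((Nat.even_sub hj).2 (iff_of_true hev h))]
  · rw [Odd.neg_one_pow h, Odd.neg_one_pow (Nat.Even.sub_odd hj hev h)]

lemma c_symm (hm : Odd m) (u v : Fin m → ℂ) : c m u v = c m v u := by
  rw [c_apply, c_apply,
    ← Equiv.sum_comp (Fin.revPerm) (fun j => (-1:ℂ)^(j:ℕ) * (v j * u j.rev))]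
  refine Finset.sum_congr rfl fun j _ => ?_
  simp only [Fin.revPerm_apply, Fin.rev_rev, parity m hm j]
  ring

lemma key (u v : Fin m → ℂ) : c m (S m u) v + c m u (S m v) = 0 := by
  match m with
  | 0 => simp [c_apply]
  | (n+1) =>
    rw [c_apply, c_apply,
      ← Equiv.sum_comp (finRotate (n+1)) (fun j => (-1:ℂ)^(j:ℕ) * ((S (n+1) u) j * v j.rev)),
      ← Finset.sum_add_distrib]
    refine Finset.sum_eq_zero fun j _ => ?_
    simp only [finRotate_succ_apply]
    by_cases hj : j = Fin.last n
    · have h1 : ((j + 1 : Fin (n+1)) : ℕ) = 0 := by rw [Fin.val_add_one, if_pos hj]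
      have h2 : ((j.rev : Fin (n+1)) : ℕ) = 0 := by rw [Fin.val_rev, hj]; simp
      rw [S_apply, S_apply, if_pos h1, if_pos h2]
      ring
    · have hjn : (j : ℕ) < n := by
        have := j.isLt
        rcases Nat.lt_or_ge (j : ℕ) n with h | h
        · exact h
        · exact absurd (Fin.ext (by omega : (j:ℕ) = n)) hj
      have h1 : ((j + 1 : Fin (n+1)) : ℕ) = (j : ℕ) + 1 := by
        rw [Fin.val_add_one, if_neg hj]
      rw [S_apply, S_apply, if_neg (by omega : ¬ ((j + 1 : Fin (n+1)) : ℕ) = 0),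
        if_neg (show ¬ ((j.rev : Fin (n+1)) : ℕ) = 0 by rw [Fin.val_rev]; omega)]
      have hu : u (⟨((j + 1 : Fin (n+1)) : ℕ) - 1,
          Nat.lt_of_le_of_lt (Nat.sub_le _ _) (j+1).isLt⟩ : Fin (n+1)) = u j := by
        congr 1
        exact Fin.ext (show ((j + 1 : Fin (n+1)) : ℕ) - 1 = (j : ℕ) by omega)
      have hv : v (⟨((j.rev : Fin (n+1)) : ℕ) - 1,
          Nat.lt_of_le_of_lt (Nat.sub_le _ _) j.rev.isLt⟩ : Fin (n+1)) =
          v ((j + 1 : Fin (n+1)).rev) := by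
        congr 1
        refine Fin.ext ?_
        show ((j.rev : Fin (n+1)) : ℕ) - 1 = ((j + 1 : Fin (n+1)).rev : ℕ)
        rw [Fin.val_rev, Fin.val_rev, h1]
        omega
      rw [hu, hv, h1, pow_succ]
      ring

def e2 : Fin 2 → ℂ := Pi.single 1 1

lemma e2_zero : e2 0 = 0 := by simp [e2, Pi.single_eq_of_ne]

def Gam : (Fin m → ℂ) →ₗ[ℂ] (Fin m → ℂ) →ₗ[ℂ] (Fin 2 → ℂ) :=
  (c m).compr₂ (LinearMap.toSpanSingleton ℂ (Fin 2 → ℂ) e2)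

lemma Gam_apply (u v : Fin m → ℂ) : Gam m u v = c m u v • e2 := rfl

def rho : (Fin 2 → ℂ) →ₗ[ℂ] (Fin m → ℂ) →ₗ[ℂ] (Fin m → ℂ) :=
  (LinearMap.proj (0 : Fin 2)).smulRight (S m)

lemma rho_apply (x : Fin 2 → ℂ) (v : Fin m → ℂ) : rho m x v = x 0 • S m v := rfl

lemma S_single (i : Fin m) :
    S m (Pi.single i 1) =
      if h : (i : ℕ) + 1 < m then Pi.single (⟨(i : ℕ) + 1, h⟩ : Fin m) 1 else 0 := by
  funext j
  rw [S_apply]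
  split_ifs with h0 h1 h1
  · rw [Pi.single_eq_of_ne (fun hc => by
      have h : (j : ℕ) = (i : ℕ) + 1 := Fin.ext_iff.1 hc
      omega)]
  · rfl
  · rw [Pi.single_apply, Pi.single_apply]
    have : (⟨(j : ℕ) - 1, Nat.lt_of_le_of_lt (Nat.sub_le _ _) j.isLt⟩ : Fin m) = i
        ↔ j = (⟨(i : ℕ) + 1, h1⟩ : Fin m) := by
      rw [Fin.ext_iff, Fin.ext_iff]; simp only []; omega
    split_ifs with h2 h3 h3
    · rfl
    · exact absurd (this.1 h2) h3
    · exact absurd (this.2 h3) h2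
    · rfl
  · rw [Pi.single_apply, if_neg (fun hc => by
      have h : (j : ℕ) - 1 = (i : ℕ) := Fin.ext_iff.1 hc
      have := j.isLt
      omega), Pi.zero_apply]

lemma rho_e1_single (i : Fin m) :
    rho m (Pi.single 0 1) (Pi.single i 1) =
      if h : (i : ℕ) + 1 < m then Pi.single (⟨(i : ℕ) + 1, h⟩ : Fin m) 1 else 0 := by
  rw [rho_apply, Pi.single_eq_same, one_smul, S_single]

lemma rho_e2 (u : Fin m → ℂ) : rho m (Pi.single 1 1) u = 0 := by
  rw [rho_apply, Pi.single_eq_of_ne (by decide), zero_smul]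

lemma Gam_single (j l : Fin m) :
    Gam m (Pi.single j 1) (Pi.single l 1) =
      if l = j.rev then ((-1 : ℂ) ^ (j : ℕ)) • e2 else 0 := by
  rw [Gam_apply, c_apply]
  rw [Finset.sum_eq_single j]
  · rw [Pi.single_eq_same, Pi.single_apply]
    split_ifs with h1 h2 h2
    · simp
    · exact absurd h1.symm h2
    · exact absurd h2.symm h1
    · simp
  · intro b _ hb
    rw [Pi.single_eq_of_ne hb, zero_mul, mul_zero]
  · intro h; exact absurd (Finset.mem_univ j) h

/-- The Lie superalgebra `K^{2,m}`. -/
def Lc (hm : Odd m) : SuperBracket (Fin 2 → ℂ) (Fin m → ℂ) where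
  b0 := 0
  ρ := rho m
  Γ := Gam m
  b0_skew := by intro x y; simp
  Γ_symm := by intro u v; rw [Gam_apply, Gam_apply, c_symm m hm]
  jacobi00 := by intro x y z; simp
  jacobi001 := by
    intro x y u
    simp only [LinearMap.zero_apply, LinearMap.map_zero, rho_apply, map_smul]
    rw [smul_comm]
    simp
  jacobi011 := by
    intro x u v
    simp only [LinearMap.zero_apply, rho_apply, map_smul, LinearMap.smul_apply, Gam_apply]
    rw [← smul_add, ← add_smul, key]
    simp
  jacobi111 := by
    intro u v w
    simp only [Gam_apply, rho_apply, LinearMap.smul_apply, Pi.smul_apply, e2_zero,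
      smul_eq_mul, mul_zero, zero_smul, add_zero]

lemma single_eq_smul {n : ℕ} (i : Fin n) (x : ℂ) :
    (Pi.single i x : Fin n → ℂ) = x • (Pi.single i 1 : Fin n → ℂ) := by
  rw [← Pi.single_smul]; simp

section uniq

variable {m} (L : SuperBracket (Fin 2 → ℂ) (Fin m → ℂ))

lemma rho_eq
    (h1 : ∀ i : Fin m, L.ρ (Pi.single 0 1) (Pi.single i 1) =
      if h : (i : ℕ) + 1 < m then Pi.single (⟨(i : ℕ) + 1, h⟩ : Fin m) 1 else 0)
    (h2 : ∀ u : Fin m → ℂ, L.ρ (Pi.single 1 1) u = 0) :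
    L.ρ = rho m := by
  have he1 : L.ρ (Pi.single 0 1) = rho m (Pi.single 0 1) := by
    apply LinearMap.pi_ext'
    intro i
    apply LinearMap.ext
    intro y
    simp only [LinearMap.comp_apply, LinearMap.single_apply]
    rw [single_eq_smul i y, map_smul, map_smul, h1 i, rho_e1_single]
  have he2 : L.ρ (Pi.single 1 1) = rho m (Pi.single 1 1) := by
    apply LinearMap.ext
    intro u
    rw [h2 u, rho_e2]
  have hx : ∀ x : Fin 2 → ℂ,
      x = x 0 • (Pi.single 0 1 : Fin 2 → ℂ) + x 1 • (Pi.single 1 1 : Fin 2 → ℂ) := by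
    intro x; funext i; fin_cases i <;> simp
  apply LinearMap.ext
  intro x
  calc L.ρ x
      = L.ρ (x 0 • (Pi.single 0 1 : Fin 2 → ℂ) + x 1 • (Pi.single 1 1 : Fin 2 → ℂ)) := by
        rw [← hx x]
    _ = x 0 • L.ρ (Pi.single 0 1) + x 1 • L.ρ (Pi.single 1 1) := by
        rw [map_add, map_smul, map_smul]
    _ = x 0 • rho m (Pi.single 0 1) + x 1 • rho m (Pi.single 1 1) := by rw [he1, he2]
    _ = rho m x := by rw [← map_smul, ← map_smul, ← map_add, ← hx x]

lemma Gam_eq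
    (h3 : ∀ j l : Fin m, L.Γ (Pi.single j 1) (Pi.single l 1) =
      if l = j.rev then ((-1 : ℂ) ^ (j : ℕ)) • (Pi.single 1 1 : Fin 2 → ℂ) else 0) :
    L.Γ = Gam m := by
  apply LinearMap.pi_ext'
  intro j
  apply LinearMap.ext
  intro a
  simp only [LinearMap.comp_apply, LinearMap.single_apply]
  rw [single_eq_smul j a, map_smul, map_smul]
  congr 1
  apply LinearMap.pi_ext'
  intro l
  apply LinearMap.ext
  intro b
  simp only [LinearMap.comp_apply, LinearMap.single_apply]
  rw [single_eq_smul l b, map_smul, map_smul, h3 j l, Gam_single]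
  rfl

end uniq

/-- The submodule of vectors vanishing in coordinates `< k`. -/
def W (k : ℕ) : Submodule ℂ (Fin m → ℂ) where
  carrier := {v | ∀ i : Fin m, (i : ℕ) < k → v i = 0}
  add_mem' := by intro a b ha hb i hi; simp [Pi.add_apply, ha i hi, hb i hi]
  zero_mem' := by intro i _; rfl
  smul_mem' := by intro t a ha i hi; simp [Pi.smul_apply, ha i hi]

lemma mem_W {k : ℕ} {v : Fin m → ℂ} : v ∈ W m k ↔ ∀ i : Fin m, (i : ℕ) < k → v i = 0 :=
  Iff.rfl

lemma S_mem_W {k : ℕ} {v : Fin m → ℂ} (hv : v ∈ W m k) : S m v ∈ W m (k + 1) := by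
  intro i hi
  rw [S_apply]
  split_ifs with h0
  · rfl
  · exact hv _ (by simp only []; omega)

lemma W_top_eq (v : Fin m → ℂ) (hv : v ∈ W m m) : v = 0 := by
  funext i
  exact hv i i.isLt

section nilp

variable {m} (L : SuperBracket (Fin 2 → ℂ) (Fin m → ℂ))
  (hb : L.b0 = 0) (hρ : L.ρ = rho m) (hΓ : L.Γ = Gam m)

include hρ in
lemma rho_mem_W {k : ℕ} (x : Fin 2 → ℂ) {v : Fin m → ℂ} (hv : v ∈ W m k) :
    L.ρ x v ∈ W m (k + 1) := by
  rw [hρ, rho_apply]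
  exact Submodule.smul_mem _ _ (S_mem_W m hv)

include hρ in
lemma rho_zero_of_central {x : Fin 2 → ℂ}
    (hx : x ∈ Submodule.span ℂ ({e2} : Set (Fin 2 → ℂ))) (v : Fin m → ℂ) :
    L.ρ x v = 0 := by
  obtain ⟨a, rfl⟩ := Submodule.mem_span_singleton.1 hx
  rw [hρ, rho_apply, Pi.smul_apply, e2_zero, smul_zero, zero_smul]

include hb hΓ in
lemma even_le_span (k : ℕ) :
    (SuperBracket.series L (k + 1)).1 ≤ Submodule.span ℂ ({e2} : Set (Fin 2 → ℂ)) := by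
  rw [SuperBracket.series]
  refine Submodule.span_le.2 ?_
  rintro z (⟨x, y, hy, rfl⟩ | ⟨u, v, hv, rfl⟩)
  · rw [hb]
    simp only [LinearMap.zero_apply]
    exact Submodule.zero_mem _
  · rw [hΓ, Gam_apply]
    exact Submodule.smul_mem _ _ (Submodule.mem_span_singleton_self _)

include hb hρ hΓ in
lemma odd_le_W (k : ℕ) : (SuperBracket.series L k).2 ≤ W m k := by
  induction k with
  | zero => exact fun v _ i hi => absurd hi (Nat.not_lt_zero _)
  | succ k ih =>
    rw [SuperBracket.series]
    refine Submodule.span_le.2 ?_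
    rintro z ⟨x, v, hxv, rfl⟩
    match k with
    | 0 =>
      exact rho_mem_W L hρ x (fun i hi => absurd hi (Nat.not_lt_zero _))
    | (k' + 1) =>
      rcases hxv with hx | hv
      · rw [rho_zero_of_central L hρ (even_le_span L hb hΓ k' hx) v]
        exact Submodule.zero_mem _
      · exact rho_mem_W L hρ x (ih hv)

include hb hρ hΓ in
lemma nilpotent (hm1 : 1 ≤ m) : L.IsNilpotent := by
  obtain ⟨n, rfl⟩ : ∃ n, m = n + 1 := ⟨m - 1, by omega⟩
  refine ⟨(n + 1) + 1, ?_⟩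
  have hodd : (SuperBracket.series L (n + 1)).2 ≤ ⊥ := by
    refine le_trans (odd_le_W L hb hρ hΓ (n + 1)) ?_
    intro v hv
    rw [Submodule.mem_bot]
    exact W_top_eq _ v hv
  have h1 : (SuperBracket.series L ((n + 1) + 1)).1 = ⊥ := by
    rw [eq_bot_iff, SuperBracket.series]
    refine Submodule.span_le.2 ?_
    rintro z (⟨x, y, hy, rfl⟩ | ⟨u, v, hv, rfl⟩)
    · rw [hb]; simp
    · have : v = 0 := by simpa [Submodule.mem_bot] using hodd hv
      rw [this]
      simp
  have h2 : (SuperBracket.series L ((n + 1) + 1)).2 = ⊥ := by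
    rw [eq_bot_iff, SuperBracket.series]
    refine Submodule.span_le.2 ?_
    rintro z ⟨x, v, hx | hv, rfl⟩
    · rw [rho_zero_of_central L hρ (even_le_span L hb hΓ n hx) v]
      simp
    · have : v = 0 := by simpa [Submodule.mem_bot] using hodd hv
      rw [this]
      simp
  rw [Prod.ext_iff]
  exact ⟨h1, h2⟩

end nilp

end
end K2m

/-- For odd `m`, the brackets `[e₁,fᵢ] = f_{i+1}` (`1 ≤ i ≤ m-1`) and
`[f_j, f_{m+1-j}] = (-1)^{j+1} e₂` define a nilpotent Lie superalgebra
`K^{2,m}` of dimension `(2|m)`.  (Indices below are 0-based: `Fin.rev i`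
corresponds to `m+1-j` and `(-1)^i` to `(-1)^{j+1}`.) -/
theorem stmt19 (m : ℕ) (hm : Odd m) :
    (∃ L : SuperBracket (Fin 2 → ℂ) (Fin m → ℂ),
        L.b0 = 0 ∧
        (∀ i : Fin m, L.ρ (Pi.single 0 1) (Pi.single i 1) =
          if h : (i : ℕ) + 1 < m then Pi.single (⟨(i : ℕ) + 1, h⟩ : Fin m) 1 else 0) ∧
        (∀ u : Fin m → ℂ, L.ρ (Pi.single 1 1) u = 0) ∧
        (∀ j l : Fin m, L.Γ (Pi.single j 1) (Pi.single l 1) =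
          if l = j.rev then ((-1 : ℂ) ^ (j : ℕ)) • (Pi.single 1 1 : Fin 2 → ℂ) else 0)) ∧
    ∀ L : SuperBracket (Fin 2 → ℂ) (Fin m → ℂ),
      (L.b0 = 0 ∧
        (∀ i : Fin m, L.ρ (Pi.single 0 1) (Pi.single i 1) =
          if h : (i : ℕ) + 1 < m then Pi.single (⟨(i : ℕ) + 1, h⟩ : Fin m) 1 else 0) ∧
        (∀ u : Fin m → ℂ, L.ρ (Pi.single 1 1) u = 0) ∧
        (∀ j l : Fin m, L.Γ (Pi.single j 1) (Pi.single l 1) =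
          if l = j.rev then ((-1 : ℂ) ^ (j : ℕ)) • (Pi.single 1 1 : Fin 2 → ℂ) else 0)) →
      L.IsNilpotent := by
  constructor
  · refine ⟨K2m.Lc m hm, rfl, K2m.rho_e1_single m, K2m.rho_e2 m, K2m.Gam_single m⟩
  · rintro L ⟨hb, h1, h2, h3⟩
    exact K2m.nilpotent L hb (K2m.rho_eq L h1 h2) (K2m.Gam_eq L h3) hm.pos
end
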